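/- Fix a positive integer N and let φ_p, φ_s ∈ ℝ be such that for every n ∈ {0, 1, …, N−1}, (1 + n·f_0/f_c)·(φ_p − φ_s) ∉ 2πℤ. Then for all τ_p, τ_s ∈ ℝ, the quantity (1/(M·N)) · ⟨Ξ_{M,N}(φ_p,τ_p), Ξ_{M,N}(φ_s,τ_s)⟩ tends to 0 as M → ∞. (This is the case of Theorem 1 where two paths have different angles.) -/

import Mathlib

/-- The beam-squint matrix Ξ_{M,N}(φ,τ) with entries
exp(−i·m·(1 + n·f0/fc)·φ) · exp(−i·2π·n·f0·τ). -/
noncomputable def Xi (f0 fc : ℝ) (M N : ℕ) (φ τ : ℝ) : Matrix (Fin M) (Fin N) ℂ :=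
  Matrix.of fun m n =>
    Complex.exp (-Complex.I * ((m : ℕ) : ℂ) * (1 + ((n : ℕ) : ℂ) * (f0 : ℂ) / (fc : ℂ)) * (φ : ℂ)) *
    Complex.exp (-Complex.I * (2 * (Real.pi : ℂ) * ((n : ℕ) : ℂ) * (f0 : ℂ) * (τ : ℂ)))

/-- Frobenius inner product ⟨A, B⟩ = Σ_{m,n} conj(A_{m,n})·B_{m,n}. -/
noncomputable def frobInner (M N : ℕ) (A B : Matrix (Fin M) (Fin N) ℂ) : ℂ :=
  ∑ m, ∑ n, (starRingEnd ℂ) (A m n) * B m n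

/-!
Entrywise, `conj Ξ(φp,τp) * Ξ(φs,τs)` at `(m, n)` is `dₙ zₙ ^ m` with `|dₙ| = 1` and
`zₙ = exp (i (1 + n f₀/f_c)(φp − φs))`, so the normalized inner product is an average over
`n < N` of Cesàro means `M⁻¹ ∑_{m<M} zₙ ^ m`. The hypothesis says exactly that each `zₙ ≠ 1`,
and a geometric sum of a point `z ≠ 1` of the closed unit disc is bounded by `2 / ‖z - 1‖`.
-/

open Filter Finset Complex

lemma tendsto_inv_mul_geom_sum_zero {𝕜 : Type*} [RCLike 𝕜] {z : 𝕜} (hz : ‖z‖ ≤ 1)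
    (hz1 : z ≠ 1) :
    Tendsto (fun M : ℕ => (1 / (M : 𝕜)) * ∑ m ∈ range M, z ^ m) atTop (nhds 0) := by
  have hpos : 0 < ‖z - 1‖ := norm_pos_iff.2 (sub_ne_zero.2 hz1)
  refine squeeze_zero_norm (fun M => ?_)
    (tendsto_const_div_atTop_nhds_zero_nat (2 / ‖z - 1‖))
  have hnum : ‖z ^ M - 1‖ ≤ 2 :=
    calc ‖z ^ M - 1‖ ≤ ‖z‖ ^ M + ‖(1 : 𝕜)‖ := by rw [← norm_pow]; exact norm_sub_le _ _
      _ ≤ 2 := by rw [norm_one]; linarith [pow_le_one₀ (norm_nonneg z) hz (n := M)]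
  rw [norm_mul, geom_sum_eq hz1, norm_div, norm_div, norm_one, RCLike.norm_natCast,
    div_mul_div_comm, one_mul, div_div, mul_comm ‖z - 1‖]
  gcongr

lemma exp_ofReal_mul_I_ne_one {θ : ℝ} (h : ∀ k : ℤ, θ ≠ 2 * Real.pi * k) :
    exp (θ * I) ≠ 1 := by
  rw [Ne, exp_eq_one_iff]
  rintro ⟨k, hk⟩
  refine h k (ofReal_injective (mul_right_cancel₀ I_ne_zero ?_))
  push_cast
  linear_combination hk

lemma conj_Xi_mul_Xi (f0 fc : ℝ) (M N : ℕ) (φp φs τp τs : ℝ) (m : Fin M) (n : Fin N) :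
    starRingEnd ℂ (Xi f0 fc M N φp τp m n) * Xi f0 fc M N φs τs m n =
      exp ((2 * Real.pi * n * f0 * (τp - τs) : ℝ) * I) *
        exp (((1 + n * f0 / fc) * (φp - φs) : ℝ) * I) ^ (m : ℕ) := by
  simp only [Xi, Matrix.of_apply, ← exp_conj, ← exp_nat_mul, ← exp_add]
  congr 1
  simp only [map_mul, map_add, map_one, map_div₀, conj_I, conj_ofReal, map_natCast, map_ofNat,
    map_neg]
  push_cast
  ring

lemma one_div_mul_frobInner_Xi_eq_sum (f0 fc : ℝ) (M N : ℕ) (φp φs τp τs : ℝ) :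
    (1 / ((M : ℂ) * N)) * frobInner M N (Xi f0 fc M N φp τp) (Xi f0 fc M N φs τs) =
      ∑ n : Fin N, exp ((2 * Real.pi * n * f0 * (τp - τs) : ℝ) * I) / N *
        ((1 / (M : ℂ)) * ∑ m ∈ range M,
          exp (((1 + n * f0 / fc) * (φp - φs) : ℝ) * I) ^ m) := by
  simp only [frobInner, conj_Xi_mul_Xi]
  rw [Finset.sum_comm, Finset.mul_sum]
  refine Finset.sum_congr rfl fun n _ => ?_
  rw [← Finset.mul_sum, Fin.sum_univ_eq_sum_range (fun m => exp (_ * I) ^ m) M]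
  field_simp

theorem stmt_2_general (f0 fc : ℝ) (N : ℕ)
    (φp φs : ℝ)
    (h : ∀ n : ℕ, n < N → ∀ k : ℤ, (1 + (n : ℝ) * f0 / fc) * (φp - φs) ≠ 2 * Real.pi * (k : ℝ))
    (τp τs : ℝ) :
    Filter.Tendsto (fun M : ℕ =>
      (1 / ((M : ℂ) * (N : ℂ))) * frobInner M N (Xi f0 fc M N φp τp) (Xi f0 fc M N φs τs))
      Filter.atTop (nhds 0) := by
  simp only [one_div_mul_frobInner_Xi_eq_sum]
  rw [show (0 : ℂ) = ∑ _n : Fin N, 0 by simp]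
  refine tendsto_finsetSum _ fun n _ => ?_
  simpa using (tendsto_inv_mul_geom_sum_zero (norm_exp_ofReal_mul_I _).le
    (exp_ofReal_mul_I_ne_one (h n n.2))).const_mul
      (exp ((2 * Real.pi * n * f0 * (τp - τs) : ℝ) * I) / N)

/-- different angles: if for every n ∈ {0,…,N−1},
(1 + n·f0/fc)·(φp − φs) ∉ 2πℤ, then the normalized Frobenius inner product
tends to 0 as M → ∞. -/
theorem stmt_2 (f0 fc : ℝ) (hf0 : 0 < f0) (hfc : 0 < fc) (N : ℕ) (hN : 0 < N)
    (φp φs : ℝ)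
    (h : ∀ n : ℕ, n < N → ∀ k : ℤ, (1 + (n : ℝ) * f0 / fc) * (φp - φs) ≠ 2 * Real.pi * (k : ℝ))
    (τp τs : ℝ) :
    Filter.Tendsto (fun M : ℕ =>
      (1 / ((M : ℂ) * (N : ℂ))) * frobInner M N (Xi f0 fc M N φp τp) (Xi f0 fc M N φs τs))
      Filter.atTop (nhds 0) :=
  stmt_2_general f0 fc N φp φs h τp τs
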